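/- Let 0 < β < α ≤ 1. There exists a constant C = C(α, β) < ∞ such that for every d ≥ 1, every continuous path x : [0,1] → ℝ^d with ‖x‖_α < ∞, and every subdivision D of [0,1] with mesh |D|, one has sup_{0 ≤ s < t ≤ 1} |(x(t) − x^D(t)) − (x(s) − x^D(s))| / (t − s)^β ≤ C ‖x‖_α |D|^{α − β}. -/

import Mathlib

open MeasureTheory ProbabilityTheory Filter Set

noncomputable section

abbrev Vec (d : ℕ) := EuclideanSpace ℝ (Fin d)
abbrev Ten (d : ℕ) := EuclideanSpace ℝ (Fin d × Fin d)

/-- Elementary tensor `a ⊗ b` of two vectors in `ℝ^d`, realized in `ℝ^{d×d}`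
with the Euclidean (Hilbert–Schmidt) norm. -/
def tens {d : ℕ} (a b : Vec d) : Ten d := WithLp.toLp 2 (fun p => a p.1 * b p.2)

/-- The transposition map `π` with `π (a ⊗ b) = b ⊗ a`. -/
def tswap {d : ℕ} (z : Ten d) : Ten d := WithLp.toLp 2 (fun p => z (p.2, p.1))

/-- A subdivision `0 = t₀ < t₁ < ⋯ < t_N = 1` of `[0,1]`. -/
structure Subdivision : Type where
  N : ℕ
  pos : 0 < N
  t : ℕ → ℝ
  zero : t 0 = 0
  last : t N = 1
  mono : ∀ i, i < N → t i < t (i + 1)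

/-- The mesh `|D|` of a subdivision. -/
def Subdivision.mesh (D : Subdivision) : ℝ :=
  (Finset.range D.N).sup' (Finset.nonempty_range_iff.mpr D.pos.ne')
    (fun i => D.t (i + 1) - D.t i)

/-- `xD` is the piecewise linear interpolation of `x` along `D`. -/
def IsPL {d : ℕ} (D : Subdivision) (x xD : ℝ → Vec d) : Prop :=
  ∀ i, i < D.N → ∀ u ∈ Icc (D.t i) (D.t (i + 1)),
    xD u = x (D.t i) + ((u - D.t i) / (D.t (i + 1) - D.t i)) • (x (D.t (i + 1)) - x (D.t i))

/-- `xD'` is the (piecewise constant) derivative of the piecewise linear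
interpolation of `x` along `D`. -/
def IsPLDeriv {d : ℕ} (D : Subdivision) (x xD' : ℝ → Vec d) : Prop :=
  ∀ i, i < D.N → ∀ u ∈ Ioo (D.t i) (D.t (i + 1)),
    xD' u = (D.t (i + 1) - D.t i)⁻¹ • (x (D.t (i + 1)) - x (D.t i))

/-- `B` is a standard `d`-dimensional Brownian motion on `[0,1]`: a.s. continuous paths,
`B 0 = 0`, and the coordinates of all increments over `[0,1]` are jointly independent
centered Gaussians, the coordinates of the increment over `[s,t]` having variance `t - s`.
(Equivalently, the `d` coordinate processes are independent centered Gaussian processes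
with covariance `min s t`.) -/
structure IsBrownian (d : ℕ) {Ω : Type*} [MeasurableSpace Ω] (P : Measure Ω)
    (B : ℝ → Ω → Vec d) : Prop where
  meas : ∀ t, Measurable (B t)
  cont : ∀ᵐ ω ∂P, ContinuousOn (fun t => B t ω) (Icc 0 1)
  init : ∀ᵐ ω ∂P, B 0 ω = 0
  incr : ∀ s t : ℝ, 0 ≤ s → s ≤ t → t ≤ 1 → ∀ i : Fin d,
    Measure.map (fun ω => B t ω i - B s ω i) P = gaussianReal 0 (Real.toNNReal (t - s))
  indep : ∀ (n : ℕ) (τ : ℕ → ℝ), Monotone τ → (∀ k, τ k ∈ Icc (0 : ℝ) 1) →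
    iIndepFun
      (fun p : Fin n × Fin d => fun ω => B (τ (p.1.val + 1)) ω p.2 - B (τ p.1.val) ω p.2) P

/-! On a cell `[tᵢ, tᵢ₊₁]` of `D`, the error `x - x^D` is `α`-Hölder with constant `2M`: the chord
has slope `(x(tᵢ₊₁) - x(tᵢ))/Δ` and `(b - a)/Δ · MΔ^α ≤ M(b - a)^α` because `α ≤ 1`. Within one
cell, `(t - s)^α ≤ |D|^{α-β} (t - s)^β`. Otherwise the error vanishes at the nodes, so its increment
over `[s, t]` splits at the nodes inside `[s, t]` next to `s` and to `t` into two increments within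
single cells, each over a length at most `min(|D|, t - s)`; hence `C = 4`. -/

lemma exists_lt_mem_Icc_succ {γ : Type*} [LinearOrder γ] (f : ℕ → γ) {u : γ} (h0 : f 0 ≤ u) :
    ∀ {n : ℕ}, u ≤ f n → 0 < n → ∃ i < n, u ∈ Icc (f i) (f (i + 1))
  | 0, _, hn => absurd hn (lt_irrefl 0)
  | n + 1, hu, _ => by
    by_cases hfn : f n ≤ u
    · exact ⟨n, n.lt_succ_self, hfn, hu⟩
    · have hn : 0 < n := Nat.pos_of_ne_zero fun h => hfn (h ▸ h0)
      obtain ⟨i, hi, hui⟩ := exists_lt_mem_Icc_succ f h0 (not_le.mp hfn).le hn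
      exact ⟨i, hi.trans n.lt_succ_self, hui⟩

namespace Real

lemma div_mul_rpow_le_rpow {r Δ α : ℝ} (hr : 0 ≤ r) (hrΔ : r ≤ Δ) (hα : α ≤ 1) :
    r / Δ * Δ ^ α ≤ r ^ α := by
  rcases (hr.trans hrΔ).eq_or_lt with hΔ | hΔ
  · simpa [← hΔ] using rpow_nonneg hr α
  calc r / Δ * Δ ^ α ≤ (r / Δ) ^ α * Δ ^ α := by
        gcongr
        exact self_le_rpow_of_le_one (by positivity) ((div_le_one hΔ).mpr hrΔ) hα
    _ = r ^ α := by rw [div_rpow hr hΔ.le, div_mul_cancel₀ _ (rpow_pos_of_pos hΔ α).ne']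

lemma rpow_le_rpow_sub_mul_rpow {r A B α β : ℝ} (hr : 0 ≤ r) (hrA : r ≤ A) (hrB : r ≤ B)
    (hβ : 0 ≤ β) (hβα : β ≤ α) (hα : α ≠ 0) : r ^ α ≤ A ^ (α - β) * B ^ β := by
  calc r ^ α = r ^ (α - β) * r ^ β := by rw [← rpow_add' hr (by simpa using hα), sub_add_cancel]
    _ ≤ A ^ (α - β) * B ^ β :=
      mul_le_mul (rpow_le_rpow hr hrA (sub_nonneg.2 hβα)) (rpow_le_rpow hr hrB hβ)
        (rpow_nonneg hr β) (rpow_nonneg (hr.trans hrA) _)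

end Real

namespace Subdivision

variable (D : Subdivision)

lemma t_monotoneOn : MonotoneOn D.t (Iic D.N) :=
  (strictMonoOn_Iic_of_lt_succ fun m hm => by simpa using D.mono m hm).monotoneOn

lemma t_mem_Icc {k : ℕ} (hk : k ≤ D.N) : D.t k ∈ Icc (0 : ℝ) 1 := by
  refine ⟨?_, ?_⟩
  · rw [← D.zero]; exact D.t_monotoneOn (Nat.zero_le _) hk (Nat.zero_le _)
  · rw [← D.last]; exact D.t_monotoneOn hk self_mem_Iic hk

lemma sub_le_mesh {i : ℕ} (hi : i < D.N) : D.t (i + 1) - D.t i ≤ D.mesh :=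
  Finset.le_sup' (fun i => D.t (i + 1) - D.t i) (Finset.mem_range.mpr hi)

lemma exists_mem_cell {u : ℝ} (hu : u ∈ Icc (0 : ℝ) 1) :
    ∃ i < D.N, u ∈ Icc (D.t i) (D.t (i + 1)) :=
  exists_lt_mem_Icc_succ D.t (D.zero ▸ hu.1) (D.last ▸ hu.2) D.pos

lemma mesh_nonneg : 0 ≤ D.mesh :=
  (sub_pos.2 (D.mono 0 D.pos)).le.trans (D.sub_le_mesh D.pos)

def HolderOnCells {E : Type*} [SeminormedAddCommGroup E] (e : ℝ → E) (K α : ℝ) : Prop :=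
  ∀ i < D.N, ∀ a b, D.t i ≤ a → a ≤ b → b ≤ D.t (i + 1) → ‖e b - e a‖ ≤ K * (b - a) ^ α

end Subdivision

namespace Subdivision.HolderOnCells

variable {E : Type*} [SeminormedAddCommGroup E] {D : Subdivision} {e : ℝ → E} {K α β : ℝ}

lemma norm_sub_le (he : D.HolderOnCells e K α) (hK : 0 ≤ K) (hβ : 0 ≤ β) (hβα : β ≤ α)
    (hα : α ≠ 0) {i : ℕ} (hi : i < D.N) {a b c : ℝ} (ha : D.t i ≤ a) (hab : a ≤ b)
    (hb : b ≤ D.t (i + 1)) (hc : b - a ≤ c) :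
    ‖e b - e a‖ ≤ K * D.mesh ^ (α - β) * c ^ β :=
  calc ‖e b - e a‖ ≤ K * (b - a) ^ α := he i hi a b ha hab hb
    _ ≤ K * (D.mesh ^ (α - β) * c ^ β) := by
      gcongr
      exact Real.rpow_le_rpow_sub_mul_rpow (sub_nonneg.2 hab)
        (by linarith [D.sub_le_mesh hi]) hc hβ hβα hα
    _ = K * D.mesh ^ (α - β) * c ^ β := (mul_assoc _ _ _).symm

lemma norm_sub_le_of_vanishing (he : D.HolderOnCells e K α) (hK : 0 ≤ K) (hβ : 0 ≤ β)
    (hβα : β ≤ α) (hα : α ≠ 0) (h0 : ∀ k ≤ D.N, e (D.t k) = 0) {s t : ℝ} (hs : 0 ≤ s)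
    (hst : s ≤ t) (ht : t ≤ 1) :
    ‖e t - e s‖ ≤ 2 * K * D.mesh ^ (α - β) * (t - s) ^ β := by
  have hR : 0 ≤ K * D.mesh ^ (α - β) * (t - s) ^ β := by
    have := D.mesh_nonneg
    have : 0 ≤ t - s := sub_nonneg.2 hst
    positivity
  obtain ⟨j, hj, htj⟩ := D.exists_mem_cell ⟨hs.trans hst, ht⟩
  by_cases hsj : D.t j ≤ s
  · linarith [he.norm_sub_le hK hβ hβα hα hj hsj hst htj.2 le_rfl]
  obtain ⟨i, hi, hsi⟩ := D.exists_mem_cell ⟨hs, hst.trans ht⟩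
  by_cases hti : t ≤ D.t (i + 1)
  · linarith [he.norm_sub_le hK hβ hβα hα hi hsi.1 hst hti le_rfl]
  push Not at hsj hti
  have hsplit : e t - e s = (e t - e (D.t j)) + (e (D.t (i + 1)) - e s) := by
    rw [h0 j hj.le, h0 (i + 1) hi]; abel
  calc ‖e t - e s‖ ≤ ‖e t - e (D.t j)‖ + ‖e (D.t (i + 1)) - e s‖ :=
        hsplit ▸ norm_add_le _ _
    _ ≤ K * D.mesh ^ (α - β) * (t - s) ^ β + K * D.mesh ^ (α - β) * (t - s) ^ β :=
        add_le_add (he.norm_sub_le hK hβ hβα hα hj le_rfl htj.1 htj.2 (by linarith))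
          (he.norm_sub_le hK hβ hβα hα hi hsi.1 hsi.2 le_rfl (by linarith))
    _ = 2 * K * D.mesh ^ (α - β) * (t - s) ^ β := by ring

end Subdivision.HolderOnCells

namespace IsPL

variable {d : ℕ} {D : Subdivision} {x xD : ℝ → Vec d}

lemma sub_eq (h : IsPL D x xD) {i : ℕ} (hi : i < D.N) {a b : ℝ}
    (ha : a ∈ Icc (D.t i) (D.t (i + 1))) (hb : b ∈ Icc (D.t i) (D.t (i + 1))) :
    xD b - xD a = ((b - a) / (D.t (i + 1) - D.t i)) • (x (D.t (i + 1)) - x (D.t i)) := by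
  rw [h i hi b hb, h i hi a ha, add_sub_add_left_eq_sub, ← sub_smul, ← sub_div,
    sub_sub_sub_cancel_right]

lemma apply_t (h : IsPL D x xD) {k : ℕ} (hk : k ≤ D.N) : xD (D.t k) = x (D.t k) := by
  rcases k with _ | j
  · simpa using h 0 D.pos (D.t 0) ⟨le_rfl, (D.mono 0 D.pos).le⟩
  · have hj : j < D.N := hk
    rw [h j hj _ ⟨(D.mono j hj).le, le_rfl⟩, div_self (sub_pos.2 (D.mono j hj)).ne', one_smul,
      add_sub_cancel]

lemma holderOnCells (h : IsPL D x xD) {α M : ℝ} (hα : α ≤ 1) (hM : 0 ≤ M)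
    (hx : ∀ s t : ℝ, 0 ≤ s → s < t → t ≤ 1 → ‖x t - x s‖ ≤ M * (t - s) ^ α) :
    D.HolderOnCells (x - xD) (2 * M) α := by
  intro i hi a b ha hab hb
  rcases hab.eq_or_lt with rfl | hab
  · rw [sub_self, norm_zero]; positivity
  have hp := D.t_mem_Icc hi.le
  have hq := D.t_mem_Icc (Nat.succ_le_of_lt hi)
  have hΔ : 0 < D.t (i + 1) - D.t i := sub_pos.2 (D.mono i hi)
  have hxab := hx a b (hp.1.trans ha) hab (hb.trans hq.2)
  have hxnode := hx _ _ hp.1 (D.mono i hi) hq.2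
  calc ‖(x - xD) b - (x - xD) a‖
        = ‖(x b - x a) - ((b - a) / (D.t (i + 1) - D.t i)) • (x (D.t (i + 1)) - x (D.t i))‖ := by
          rw [Pi.sub_apply, Pi.sub_apply, ← h.sub_eq hi ⟨ha, hab.le.trans hb⟩
            ⟨ha.trans hab.le, hb⟩]
          congr 1; abel
    _ ≤ ‖x b - x a‖ + (b - a) / (D.t (i + 1) - D.t i) * ‖x (D.t (i + 1)) - x (D.t i)‖ := 
          (norm_sub_le _ _).trans_eq (by rw [norm_smul, Real.norm_of_nonneg (by positivity)])
    _ ≤ M * (b - a) ^ α + (b - a) / (D.t (i + 1) - D.t i) * (M * (D.t (i + 1) - D.t i) ^ α) := by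
          gcongr
    _ ≤ M * (b - a) ^ α + M * (b - a) ^ α := by
          rw [mul_left_comm]
          gcongr
          exact Real.div_mul_rpow_le_rpow (sub_nonneg.2 hab.le) (by linarith) hα
    _ = 2 * M * (b - a) ^ α := by ring

end IsPL

/-- **Rate of convergence of piecewise linear interpolation in Hölder norm.**
Let `0 < β < α ≤ 1`. There is `C = C(α,β) < ∞` such that for every `d ≥ 1`, every continuous
path `x : [0,1] → ℝ^d` with `α`-Hölder seminorm at most `M`, and every subdivision `D` of
`[0,1]` with mesh `|D|`, one has
`sup_{0 ≤ s < t ≤ 1} |(x(t) − x^D(t)) − (x(s) − x^D(s))| / (t − s)^β ≤ C M |D|^{α−β}`. -/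
theorem holder_dist_piecewise_linear (α β : ℝ) (hβ0 : 0 < β) (hβα : β < α) (hα1 : α ≤ 1) :
    ∃ C : ℝ, ∀ d : ℕ, 1 ≤ d → ∀ (x xD : ℝ → Vec d) (D : Subdivision) (M : ℝ),
      ContinuousOn x (Icc 0 1) → 0 ≤ M →
      (∀ s t : ℝ, 0 ≤ s → s < t → t ≤ 1 → ‖x t - x s‖ ≤ M * (t - s) ^ α) →
      IsPL D x xD →
      ∀ s t : ℝ, 0 ≤ s → s < t → t ≤ 1 →
        ‖(x t - xD t) - (x s - xD s)‖ ≤ C * M * D.mesh ^ (α - β) * (t - s) ^ β := by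
  refine ⟨4, fun d _ x xD D M _ hM hx hPL s t hs hst ht => ?_⟩
  calc ‖(x t - xD t) - (x s - xD s)‖ = ‖(x - xD) t - (x - xD) s‖ := rfl
    _ ≤ 2 * (2 * M) * D.mesh ^ (α - β) * (t - s) ^ β :=
      (hPL.holderOnCells hα1 hM hx).norm_sub_le_of_vanishing (by positivity) hβ0.le hβα.le
        (hβ0.trans hβα).ne' (fun k hk => by simp [hPL.apply_t hk]) hs hst.le ht
    _ = 4 * M * D.mesh ^ (α - β) * (t - s) ^ β := by ring
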